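/- arXiv:1311.4256 — 6 statements merged into one kernel-verified Lean document; each statement's English description precedes it below -/
import Mathlib

section
/- Let G be a topological group, m a natural number, and for each i : Fin m let X i be a topological space equipped with a continuous G-action; let G act diagonally on the product Π i, X i. Let P be a topological space and c : P → Set (Fin m) an arbitrary function. Let r₁ be the equivalence relation on (Π i, X i) × P defined by (x,p) r₁ (y,q) iff p = q and x i = y i for every i ∉ c p, and let r₂ be the relation on ((Π i, X i)/G) × P defined by ([x],p) r₂ ([y],q) iff p = q and there exists g : G with g • (x i) = y i for every i ∉ c p. Then r₂ is a well-defined equivalence relation, G acts on the quotient ((Π i, X i) × P)/r₁ by g • [(x,p)] = [(g • x, p)], and the map h : ((((Π i, X i)/G) × P)/r₂) → (((Π i, X i) × P)/r₁)/G sending the class of ([x],p) to the class of the class of (x,p) is well defined and is a homeomorphism. -/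
/-!
Both sides are quotients of `(Π i, X i) × P`: the left one by first passing to `G`-orbits and
then applying `∼₂`, the right one by first applying `∼₁` and then passing to `G`-orbits. In both
cases `(x, p)` and `(y, q)` are identified exactly when `p = q` and some `g` carries `x` to `y`
outside `c p`. Two quotient maps with the same fibres identify their targets homeomorphically;
the only topological input is that the composite on the left is a quotient map, which holds
because the orbit map of an action by homeomorphisms is open, and products of open quotient
maps are quotient maps.
-/

/-- The equivalence relation `∼₁` on `(Π i, X i) × P`:
`(x,p) ∼₁ (y,q)` iff `p = q` and `x i = y i` for every `i ∉ c p`. -/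
def r1Setoid {m : ℕ} (X : Fin m → Type*) (P : Type*) (c : P → Set (Fin m)) :
    Setoid ((∀ i, X i) × P) where
  r a b := a.2 = b.2 ∧ ∀ i ∉ c a.2, a.1 i = b.1 i
  iseqv := by
    constructor
    · exact fun a => ⟨rfl, fun i _ => rfl⟩
    · rintro ⟨x, p⟩ ⟨y, q⟩ ⟨h1, h2⟩
      dsimp only at h1 h2 ⊢
      subst h1
      exact ⟨rfl, fun i hi => (h2 i hi).symm⟩
    · rintro ⟨x, p⟩ ⟨y, q⟩ ⟨z, s⟩ ⟨h1, h2⟩ ⟨h3, h4⟩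
      dsimp only at h1 h2 h3 h4 ⊢
      subst h1; subst h3
      exact ⟨rfl, fun i hi => (h2 i hi).trans (h4 i hi)⟩

open MulAction Topology

namespace Topology.IsQuotientMap

variable {Z X Y : Type*} [TopologicalSpace Z] [TopologicalSpace X] [TopologicalSpace Y]
  {f : Z → X} {g : Z → Y}

noncomputable def homeomorphOfSameFibers (hf : IsQuotientMap f) (hg : IsQuotientMap g)
    (hfg : ∀ a b, f a = f b ↔ g a = g b) : X ≃ₜ Y where
  toFun x := g (Function.surjInv hf.surjective x)
  invFun y := f (Function.surjInv hg.surjective y)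
  left_inv x :=
    ((hfg _ _).2 (Function.surjInv_eq hg.surjective _)).trans (Function.surjInv_eq hf.surjective x)
  right_inv y :=
    ((hfg _ _).1 (Function.surjInv_eq hf.surjective _)).trans (Function.surjInv_eq hg.surjective y)
  continuous_toFun := hf.continuous_iff.2 <| hg.continuous.congr fun a =>
    ((hfg _ _).1 (Function.surjInv_eq hf.surjective (f a))).symm
  continuous_invFun := hg.continuous_iff.2 <| hf.continuous.congr fun a =>
    ((hfg _ _).2 (Function.surjInv_eq hg.surjective (g a))).symm

theorem homeomorphOfSameFibers_apply (hf : IsQuotientMap f) (hg : IsQuotientMap g)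
    (hfg : ∀ a b, f a = f b ↔ g a = g b) (a : Z) :
    hf.homeomorphOfSameFibers hg hfg (f a) = g a :=
  (hfg _ _).1 (Function.surjInv_eq hf.surjective (f a))

end Topology.IsQuotientMap

theorem MulAction.quot_mk_eq_quot_mk_iff {G α : Type*} [Group G] [MulAction G α] {a b : α} :
    Quot.mk (fun a b : α => ∃ g : G, g • a = b) a = Quot.mk _ b ↔ ∃ g : G, g • a = b := by
  refine Quot.eq.trans (Equivalence.eqvGen_iff ⟨fun a => ⟨1, one_smul G a⟩, ?_, ?_⟩)
  · rintro a b ⟨g, rfl⟩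
    exact ⟨g⁻¹, inv_smul_smul g a⟩
  · rintro a b c ⟨g, rfl⟩ ⟨g', rfl⟩
    exact ⟨g' * g, mul_smul g' g a⟩

section PartialOrbits

variable {G : Type*} [Group G] {ι : Type*} {X : ι → Type*} [∀ i, MulAction G (X i)]

def orbitRestrict (s : Set ι) :
    Quotient (orbitRel G (∀ i, X i)) → Quotient (orbitRel G (∀ i : s, X i)) :=
  Quotient.map s.domRestrict fun x y ⟨g, hg⟩ => ⟨g, by rw [← hg]; rfl⟩

theorem orbitRestrict_mk_eq_mk_iff {s : Set ι} {x y : ∀ i, X i} :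
    orbitRestrict s (⟦x⟧ : Quotient (orbitRel G (∀ i, X i))) = orbitRestrict s ⟦y⟧ ↔
      ∃ g : G, ∀ i ∈ s, g • x i = y i := by
  rw [orbitRestrict, Quotient.map_mk, Quotient.map_mk, eq_comm, Quotient.eq, orbitRel_apply,
    mem_orbit_iff]
  simp only [funext_iff, Subtype.forall]
  rfl

variable (G X) in
/-- `∼₂` is the kernel of `([x], p) ↦ (p, orbit of x restricted to the coordinates outside c p)`,
which makes it an equivalence relation. -/
def r2Setoid {P : Type*} (c : P → Set ι) : Setoid (Quotient (orbitRel G (∀ i, X i)) × P) :=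
  Setoid.ker fun a =>
    (⟨a.2, orbitRestrict (c a.2)ᶜ a.1⟩ : Σ p : P, Quotient (orbitRel G (∀ i : ↥(c p)ᶜ, X i)))

theorem r2Setoid_mk_iff {P : Type*} {c : P → Set ι} (x y : ∀ i, X i) (p q : P) :
    (r2Setoid G X c).r (⟦x⟧, p) (⟦y⟧, q) ↔ p = q ∧ ∃ g : G, ∀ i ∉ c p, g • x i = y i := by
  refine Setoid.ker_def.trans (Sigma.mk.inj_iff.trans ⟨?_, ?_⟩)
  · rintro ⟨rfl, h⟩
    exact ⟨rfl, orbitRestrict_mk_eq_mk_iff.1 (eq_of_heq h)⟩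
  · rintro ⟨rfl, h⟩
    exact ⟨rfl, heq_of_eq (orbitRestrict_mk_eq_mk_iff.2 h)⟩

theorem isQuotientMap_mk_r2Setoid [∀ i, TopologicalSpace (X i)]
    [∀ i, ContinuousConstSMul G (X i)] {P : Type*} [TopologicalSpace P] (c : P → Set ι) :
    IsQuotientMap fun a : (∀ i, X i) × P => Quotient.mk (r2Setoid G X c) (⟦a.1⟧, a.2) :=
  isQuotientMap_quotient_mk'.comp
    (isOpenQuotientMap_quotientMk.prodMap IsOpenQuotientMap.id).isQuotientMap

end PartialOrbits

section DiagonalAction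

variable {G : Type*} [Group G] {m : ℕ} {X : Fin m → Type*} [∀ i, MulAction G (X i)]
  {P : Type*} {c : P → Set (Fin m)}

instance instMulActionQuotientR1Setoid : MulAction G (Quotient (r1Setoid X P c)) where
  smul g := Quotient.map (fun a => (g • a.1, a.2)) fun _ _ ⟨hp, hx⟩ =>
    ⟨hp, fun i hi => congrArg (g • ·) (hx i hi)⟩
  one_smul := Quotient.ind fun a => congrArg (Quotient.mk _) (Prod.ext (one_smul G a.1) rfl)
  mul_smul g g' := Quotient.ind fun a =>
    congrArg (Quotient.mk _) (Prod.ext (mul_smul g g' a.1) rfl)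

theorem quot_mk_r1Setoid_eq_iff (x y : ∀ i, X i) (p q : P) :
    Quot.mk (fun a b : Quotient (r1Setoid X P c) => ∃ g : G, g • a = b) ⟦(x, p)⟧ =
        Quot.mk _ ⟦(y, q)⟧ ↔
      p = q ∧ ∃ g : G, ∀ i ∉ c p, g • x i = y i := by
  rw [quot_mk_eq_quot_mk_iff, ← exists_and_left]
  exact exists_congr fun g => Quotient.eq

end DiagonalAction

theorem stmt0_general (G : Type*) [Group G] [TopologicalSpace G]
    (m : ℕ) (X : Fin m → Type*) [∀ i, TopologicalSpace (X i)]
    [∀ i, MulAction G (X i)] [∀ i, ContinuousSMul G (X i)]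
    (P : Type*) [TopologicalSpace P] (c : P → Set (Fin m)) :
    ∃ s₂ : Setoid (Quotient (MulAction.orbitRel G (∀ i, X i)) × P),
      (∀ (x y : ∀ i, X i) (p q : P),
        s₂.r (Quotient.mk (MulAction.orbitRel G (∀ i, X i)) x, p)
             (Quotient.mk (MulAction.orbitRel G (∀ i, X i)) y, q) ↔
          p = q ∧ ∃ g : G, ∀ i ∉ c p, g • x i = y i) ∧
      ∃ act : MulAction G (Quotient (r1Setoid X P c)),
        (∀ (g : G) (x : ∀ i, X i) (p : P),
            act.smul g (Quotient.mk (r1Setoid X P c) (x, p)) =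
              Quotient.mk (r1Setoid X P c) (g • x, p)) ∧
        ∃ h : Quotient s₂ ≃ₜ
            Quot (fun a b : Quotient (r1Setoid X P c) => ∃ g : G, act.smul g a = b),
          ∀ (x : ∀ i, X i) (p : P),
            h (Quotient.mk s₂ (Quotient.mk (MulAction.orbitRel G (∀ i, X i)) x, p)) =
              Quot.mk _ (Quotient.mk (r1Setoid X P c) (x, p)) := by
  refine ⟨r2Setoid G X c, r2Setoid_mk_iff, inferInstance, fun _ _ _ => rfl, ?_⟩
  have hπ₂ : IsQuotientMap fun a => Quot.mk (fun a b : Quotient (r1Setoid X P c) =>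
      ∃ g : G, g • a = b) (Quotient.mk (r1Setoid X P c) a) :=
    isQuotientMap_quot_mk.comp isQuotientMap_quotient_mk'
  have same_fibers : ∀ a b : (∀ i, X i) × P,
      Quotient.mk (r2Setoid G X c) (⟦a.1⟧, a.2) = Quotient.mk _ (⟦b.1⟧, b.2) ↔
        Quot.mk _ (Quotient.mk (r1Setoid X P c) a) = Quot.mk _ (Quotient.mk _ b) :=
    fun ⟨x, p⟩ ⟨y, q⟩ =>
      Quotient.eq.trans ((r2Setoid_mk_iff x y p q).trans (quot_mk_r1Setoid_eq_iff x y p q).symm)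
  exact ⟨(isQuotientMap_mk_r2Setoid c).homeomorphOfSameFibers hπ₂ same_fibers,
    fun x p => (isQuotientMap_mk_r2Setoid c).homeomorphOfSameFibers_apply hπ₂ same_fibers (x, p)⟩

/-- Davis–Januszkiewicz type identification lemma: the relation `∼₂` on
`((Π i, X i)/G) × P` is a well-defined equivalence relation, `G` acts on the
quotient `((Π i, X i) × P)/∼₁` by `g • [(x,p)] = [(g • x, p)]`, and the map
sending the class of `([x],p)` to the class of the class of `(x,p)` is a
well-defined homeomorphism. -/
theorem stmt0 (G : Type*) [Group G] [TopologicalSpace G] [IsTopologicalGroup G]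
    (m : ℕ) (X : Fin m → Type*) [∀ i, TopologicalSpace (X i)]
    [∀ i, MulAction G (X i)] [∀ i, ContinuousSMul G (X i)]
    (P : Type*) [TopologicalSpace P] (c : P → Set (Fin m)) :
    ∃ s₂ : Setoid (Quotient (MulAction.orbitRel G (∀ i, X i)) × P),
      (∀ (x y : ∀ i, X i) (p q : P),
        s₂.r (Quotient.mk (MulAction.orbitRel G (∀ i, X i)) x, p)
             (Quotient.mk (MulAction.orbitRel G (∀ i, X i)) y, q) ↔
          p = q ∧ ∃ g : G, ∀ i ∉ c p, g • x i = y i) ∧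
      ∃ act : MulAction G (Quotient (r1Setoid X P c)),
        (∀ (g : G) (x : ∀ i, X i) (p : P),
            act.smul g (Quotient.mk (r1Setoid X P c) (x, p)) =
              Quotient.mk (r1Setoid X P c) (g • x, p)) ∧
        ∃ h : Quotient s₂ ≃ₜ
            Quot (fun a b : Quotient (r1Setoid X P c) => ∃ g : G, act.smul g a = b),
          ∀ (x : ∀ i, X i) (p : P),
            h (Quotient.mk s₂ (Quotient.mk (MulAction.orbitRel G (∀ i, X i)) x, p)) =
              Quot.mk _ (Quotient.mk (r1Setoid X P c) (x, p)) :=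
  stmt0_general G m X P c
end

section
/- Let d and k be natural numbers and A : Matrix (Fin k) (Fin d) ℤ an integer matrix admitting a right inverse over ℤ, i.e. there exists B : Matrix (Fin d) (Fin k) ℤ with A * B = 1 (in particular k ≤ d). Let T = AddCircle (1 : ℝ) and let φ : (Fin d → T) →+ (Fin k → T) be the additive group homomorphism defined by (φ x) i = ∑ j, (A i j) • (x j) (integer scalar multiplication on T). Then φ is continuous and its kernel, with the subspace topology, is isomorphic as a topological additive group to the torus Fin (d − k) → T; that is, there is an additive group isomorphism from φ.ker to Fin (d − k) → T that is also a homeomorphism. -/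
/-!
A right inverse `B` of `A` splits `ℤ^d = ker A ⊕ range B`, and `ker A` is free of rank `d - k`.
A basis of `ker A` yields integer matrices `C` and `E` with `A C = 0`, `E C = 1` and
`C E = 1 - B A`. Integer matrices act on any additive group, compatibly with products, so on
the torus `x ↦ E x` and `y ↦ C y` are mutually inverse continuous homomorphisms between
`ker A` and `T^(d-k)`.
-/

open Module

namespace LinearMap

universe u

variable {R N : Type*} {M : Type u} [Ring R] [AddCommGroup M] [Module R M] [AddCommGroup N]
  [Module R N] {f : M →ₗ[R] N} {g : N →ₗ[R] M}

def kerProjOfRightInverse (h : f ∘ₗ g = id) : M →ₗ[R] ker f :=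
  (id - g ∘ₗ f).codRestrict (ker f) fun x => by
    simp [← comp_apply f g, h]

theorem kerProjOfRightInverse_comp_subtype (h : f ∘ₗ g = id) :
    kerProjOfRightInverse h ∘ₗ (ker f).subtype = id := by
  ext x
  simp [kerProjOfRightInverse, mem_ker.mp x.2]

theorem subtype_comp_kerProjOfRightInverse (h : f ∘ₗ g = id) :
    (ker f).subtype ∘ₗ kerProjOfRightInverse h = id - g ∘ₗ f := rfl

theorem finrank_ker_of_surjective [StrongRankCondition R] [HasRankNullity.{u} R]
    [Module.Finite R M] (hf : Function.Surjective f) :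
    finrank R (ker f) = finrank R M - finrank R N := by
  rw [← (ker f).finrank_quotient_add_finrank, (f.quotKerEquivOfSurjective hf).finrank_eq]
  omega

end LinearMap

theorem Matrix.exists_ker_factorization_of_mul_eq_one {R : Type*} [CommRing R] [IsDomain R]
    [IsPrincipalIdealRing R] {k d : ℕ} {A : Matrix (Fin k) (Fin d) R}
    {B : Matrix (Fin d) (Fin k) R} (hAB : A * B = 1) :
    ∃ (C : Matrix (Fin d) (Fin (d - k)) R) (E : Matrix (Fin (d - k)) (Fin d) R),
      A * C = 0 ∧ E * C = 1 ∧ C * E = 1 - B * A := by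
  set f := toLin' A
  have hfg : f ∘ₗ toLin' B = LinearMap.id := by rw [← toLin'_mul, hAB, toLin'_one]
  have hrank : finrank R (LinearMap.ker f) = d - k := by
    have hf : Function.Surjective f := fun v => ⟨toLin' B v, LinearMap.congr_fun hfg v⟩
    rw [LinearMap.finrank_ker_of_surjective hf, finrank_fin_fun, finrank_fin_fun]
  let b := (finBasis R (LinearMap.ker f)).reindex (finCongr hrank)
  let π := LinearMap.kerProjOfRightInverse hfg
  refine ⟨LinearMap.toMatrix' ((LinearMap.ker f).subtype ∘ₗ b.equivFun.symm.toLinearMap),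
    LinearMap.toMatrix' (b.equivFun.toLinearMap ∘ₗ π), ?_, ?_, ?_⟩ <;>
    apply toLin'.injective <;>
    simp only [toLin'_mul, toLin'_toMatrix', map_zero, toLin'_one, map_sub]
  · rw [← LinearMap.comp_assoc, LinearMap.comp_ker_subtype, LinearMap.zero_comp]
  · rw [LinearMap.comp_assoc, ← LinearMap.comp_assoc _ (LinearMap.ker f).subtype,
      LinearMap.kerProjOfRightInverse_comp_subtype, LinearMap.id_comp,
      ← LinearEquiv.coe_trans, LinearEquiv.symm_trans_self, LinearEquiv.refl_toLinearMap]
  · rw [LinearMap.comp_assoc, ← LinearMap.comp_assoc π, ← LinearEquiv.coe_trans,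
      LinearEquiv.self_trans_symm, LinearEquiv.refl_toLinearMap, LinearMap.id_comp,
      LinearMap.subtype_comp_kerProjOfRightInverse]

namespace Matrix

variable {m n p G : Type*} [Fintype n] [AddCommGroup G]

def zsmulHom (M : Matrix m n ℤ) : (n → G) →+ (m → G) where
  toFun x i := ∑ j, M i j • x j
  map_zero' := by ext; simp
  map_add' x y := by ext; simp [smul_add, Finset.sum_add_distrib]

theorem zsmulHom_apply (M : Matrix m n ℤ) (x : n → G) (i : m) :
    M.zsmulHom x i = ∑ j, M i j • x j := rfl

theorem zsmulHom_mul [Fintype p] (M : Matrix m n ℤ) (N : Matrix n p ℤ) :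
    (M * N).zsmulHom (G := G) = M.zsmulHom.comp N.zsmulHom := by
  ext x i
  simp only [zsmulHom_apply, AddMonoidHom.comp_apply, mul_apply, Finset.sum_smul,
    Finset.smul_sum, mul_smul]
  exact Finset.sum_comm

theorem zsmulHom_one [DecidableEq n] : (1 : Matrix n n ℤ).zsmulHom (G := G) = .id _ := by
  ext x i
  simp [zsmulHom_apply, one_apply]

theorem zsmulHom_zero : (0 : Matrix m n ℤ).zsmulHom (G := G) = 0 := by
  ext x i
  simp [zsmulHom_apply]

theorem zsmulHom_sub (M N : Matrix m n ℤ) :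
    (M - N).zsmulHom (G := G) = M.zsmulHom - N.zsmulHom := by
  ext x i
  simp [zsmulHom_apply, sub_smul, Finset.sum_sub_distrib]

theorem continuous_zsmulHom [TopologicalSpace G] [IsTopologicalAddGroup G] (M : Matrix m n ℤ) :
    Continuous (M.zsmulHom (G := G)) :=
  continuous_pi fun i => continuous_finsetSum _ fun j _ =>
    (continuous_zsmul (M i j)).comp (continuous_apply j)

theorem zsmulHom_mem_ker_of_mul_eq_zero [Fintype p] {A : Matrix m n ℤ} {C : Matrix n p ℤ}
    (hAC : A * C = 0) (y : p → G) : C.zsmulHom y ∈ (A.zsmulHom (G := G)).ker := by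
  rw [AddMonoidHom.mem_ker, ← AddMonoidHom.comp_apply, ← zsmulHom_mul, hAC, zsmulHom_zero,
    AddMonoidHom.zero_apply]

def kerZsmulHomEquiv [Fintype m] [Fintype p] [DecidableEq n] [DecidableEq p]
    [TopologicalSpace G] [IsTopologicalAddGroup G] {A : Matrix m n ℤ} {B : Matrix n m ℤ}
    {C : Matrix n p ℤ} {E : Matrix p n ℤ} (hAC : A * C = 0) (hEC : E * C = 1)
    (hCE : C * E = 1 - B * A) :
    (A.zsmulHom (G := G)).ker ≃ₜ+ (p → G) where
  toFun x := E.zsmulHom x.1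
  invFun y := ⟨C.zsmulHom y, zsmulHom_mem_ker_of_mul_eq_zero hAC y⟩
  left_inv x := by
    ext1
    change C.zsmulHom (E.zsmulHom x.1) = x.1
    rw [← AddMonoidHom.comp_apply, ← zsmulHom_mul, hCE, zsmulHom_sub, zsmulHom_one,
      zsmulHom_mul, AddMonoidHom.sub_apply, AddMonoidHom.comp_apply, x.2, map_zero, sub_zero,
      AddMonoidHom.id_apply]
  right_inv y := by
    change E.zsmulHom (C.zsmulHom y) = y
    rw [← AddMonoidHom.comp_apply, ← zsmulHom_mul, hEC, zsmulHom_one, AddMonoidHom.id_apply]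
  map_add' x y := map_add E.zsmulHom x.1 y.1
  continuous_toFun := E.continuous_zsmulHom.comp continuous_subtype_val
  continuous_invFun := C.continuous_zsmulHom.subtype_mk _

end Matrix

/-- If the integer matrix `A : Matrix (Fin k) (Fin d) ℤ` has a right inverse over `ℤ`,
then the induced homomorphism of tori `φ : T^d →+ T^k`, `(φ x) i = ∑ j, A i j • x j`,
is continuous and its kernel is isomorphic, as a topological additive group, to the
torus `T^(d-k)`. -/
theorem stmt5 (d k : ℕ) (A : Matrix (Fin k) (Fin d) ℤ)
    (B : Matrix (Fin d) (Fin k) ℤ) (hAB : A * B = 1)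
    (φ : (Fin d → AddCircle (1 : ℝ)) →+ (Fin k → AddCircle (1 : ℝ)))
    (hφ : ∀ (x : Fin d → AddCircle (1 : ℝ)) (i : Fin k), φ x i = ∑ j, A i j • x j) :
    Continuous φ ∧
      ∃ e : φ.ker ≃+ (Fin (d - k) → AddCircle (1 : ℝ)),
        Continuous e ∧ Continuous e.symm := by
  obtain rfl : φ = A.zsmulHom := AddMonoidHom.ext fun x => funext (hφ x)
  obtain ⟨C, E, hAC, hEC, hCE⟩ := Matrix.exists_ker_factorization_of_mul_eq_one hAB
  let e := Matrix.kerZsmulHomEquiv (G := AddCircle (1 : ℝ)) hAC hEC hCE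
  exact ⟨A.continuous_zsmulHom, e.toAddEquiv, e.continuous_toFun, e.continuous_invFun⟩
end

section
/- Let j ≥ 1 be a natural number. Let ∂D ⊆ (Fin j → ℂ) be the subspace {z | (∀ i, ‖z i‖ ≤ 1) ∧ (∃ i, ‖z i‖ = 1)} (the boundary of the unit polydisc) and let S ⊆ (Fin j → ℂ) be the subspace {z | ∑ i, ‖z i‖^2 = 1} (the Euclidean unit sphere, i.e. S^{2j−1}). Then there is a homeomorphism e : ∂D → S that is equivariant for the coordinatewise action of the torus (Fin j → Circle), where Circle is the unit circle group in ℂ acting on each coordinate by multiplication: e (t • z) = t • (e z) for all t and z. -/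
/-!
The boundary of the unit polydisc is the unit sphere of the sup norm on `ℂ^j`. Radial projection
`z ↦ z / ‖z‖₂` maps it homeomorphically onto the Euclidean unit sphere, with inverse
`w ↦ w / ‖w‖_∞`. Both norms are invariant under the torus, which commutes with real scalars, so
the projection is equivariant.
-/

/-- The boundary of the unit polydisc in `ℂ^j`. -/
def polydiscBoundary (j : ℕ) : Set (Fin j → ℂ) :=
  {z | (∀ i, ‖z i‖ ≤ 1) ∧ ∃ i, ‖z i‖ = 1}

/-- The Euclidean unit sphere `S^{2j-1}` in `ℂ^j`. -/
def euclideanSphereSet (j : ℕ) : Set (Fin j → ℂ) :=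
  {z | ∑ i, ‖z i‖ ^ 2 = 1}

open Metric

section RadialProjection

variable {E : Type*} [NormedAddCommGroup E] [NormedSpace ℝ E] {N : E → ℝ}

theorem ne_zero_of_apply_eq_one (hhom : ∀ (a : ℝ) (x : E), 0 ≤ a → N (a • x) = a * N x)
    {x : E} (hx : N x = 1) : x ≠ 0 := by
  rintro rfl
  have h0 : N 0 = 0 := by simpa using hhom 0 0 le_rfl
  exact zero_ne_one (h0.symm.trans hx)

variable (hN : Continuous N) (hpos : ∀ x, x ≠ 0 → 0 < N x)
  (hhom : ∀ (a : ℝ) (x : E), 0 ≤ a → N (a • x) = a * N x)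

noncomputable def radialHomeomorph : sphere (0 : E) 1 ≃ₜ {x | N x = 1} where
  toFun x := ⟨(N x)⁻¹ • (x : E), by
    have hx := hpos x (ne_zero_of_mem_unit_sphere x)
    simp [hhom _ _ (inv_nonneg.2 hx.le), hx.ne']⟩
  invFun y := ⟨‖(y : E)‖⁻¹ • (y : E), by
    have hy := norm_pos_iff.2 (ne_zero_of_apply_eq_one hhom y.2)
    simp [norm_smul, hy.ne']⟩
  left_inv x := by
    have hx := hpos x (ne_zero_of_mem_unit_sphere x)
    ext1
    simp [norm_smul, smul_smul, abs_of_pos hx, hx.ne']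
  right_inv y := by
    have hy : N y = 1 := y.2
    have hy0 := norm_pos_iff.2 (ne_zero_of_apply_eq_one hhom hy)
    ext1
    simp [hhom _ _ (inv_nonneg.2 hy0.le), hy, smul_smul, hy0.ne']
  continuous_toFun := by
    refine Continuous.subtype_mk (Continuous.smul ?_ continuous_subtype_val) _
    exact (hN.comp continuous_subtype_val).inv₀
      fun x => (hpos x (ne_zero_of_mem_unit_sphere x)).ne'
  continuous_invFun := by
    refine Continuous.subtype_mk (Continuous.smul ?_ continuous_subtype_val) _
    exact continuous_subtype_val.norm.inv₀
      fun y => norm_ne_zero_iff.2 (ne_zero_of_apply_eq_one hhom y.2)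

@[simp]
theorem radialHomeomorph_apply (x : sphere (0 : E) 1) :
    (radialHomeomorph hN hpos hhom x : E) = (N x)⁻¹ • (x : E) :=
  rfl

theorem radialHomeomorph_smul {G : Type*} [SMul G E] [SMulCommClass G ℝ E]
    (hG : ∀ (g : G) (x : E), N (g • x) = N x) (g : G) (x : sphere (0 : E) 1)
    (hgx : g • (x : E) ∈ sphere (0 : E) 1) :
    (radialHomeomorph hN hpos hhom ⟨g • (x : E), hgx⟩ : E) =
      g • (radialHomeomorph hN hpos hhom x : E) := by
  simp [hG, smul_comm]

end RadialProjection

instance Pi.smulCommClass_pi_left {ι M R α : Type*} [SMul M α] [SMul R α]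
    [SMulCommClass M R α] : SMulCommClass (ι → M) R (ι → α) :=
  ⟨fun m r x => funext fun i => smul_comm (m i) r (x i)⟩

theorem polydiscBoundary_eq_sphere (j : ℕ) : polydiscBoundary j = sphere 0 1 := by
  ext z
  rw [mem_sphere_zero_iff_norm, polydiscBoundary]
  constructor
  · rintro ⟨hle, i, hi⟩
    exact le_antisymm ((pi_norm_le_iff_of_nonneg zero_le_one).2 hle) (hi ▸ norm_le_pi_norm z i)
  · intro hz
    have hle := (pi_norm_le_iff_of_nonneg zero_le_one).1 hz.le
    refine ⟨hle, ?_⟩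
    by_contra! hne
    exact hz.not_lt ((pi_norm_lt_iff zero_lt_one).2 fun i => (hle i).lt_of_ne (hne i))

theorem euclideanSphereSet_eq (j : ℕ) :
    euclideanSphereSet j = {z | ‖WithLp.toLp 2 z‖ = 1} := by
  ext z
  simp [euclideanSphereSet, EuclideanSpace.norm_eq]

theorem norm_toLp_circle_smul {ι : Type*} [Fintype ι] (t : ι → Circle) (z : ι → ℂ) :
    ‖WithLp.toLp 2 (t • z)‖ = ‖WithLp.toLp 2 z‖ := by
  simp [EuclideanSpace.norm_eq, Circle.norm_smul]

theorem stmt6_general (j : ℕ) :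
    ∃ e : polydiscBoundary j ≃ₜ euclideanSphereSet j,
      ∀ (t : Fin j → Circle) (z : polydiscBoundary j)
        (hz : t • (z : Fin j → ℂ) ∈ polydiscBoundary j),
        ((e ⟨t • (z : Fin j → ℂ), hz⟩ : euclideanSphereSet j) : Fin j → ℂ) =
          t • ((e z : euclideanSphereSet j) : Fin j → ℂ) := by
  have hpos (z : Fin j → ℂ) (hz : z ≠ 0) : 0 < ‖WithLp.toLp 2 z‖ := by simpa using hz
  have hhom (a : ℝ) (z : Fin j → ℂ) (ha : 0 ≤ a) :
      ‖WithLp.toLp 2 (a • z)‖ = a * ‖WithLp.toLp 2 z‖ := by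
    simp [norm_smul, ha]
  have hN : Continuous fun z : Fin j → ℂ => ‖WithLp.toLp 2 z‖ := by fun_prop
  refine ⟨(Homeomorph.setCongr (polydiscBoundary_eq_sphere j)).trans
    ((radialHomeomorph hN hpos hhom).trans (Homeomorph.setCongr (euclideanSphereSet_eq j).symm)),
    fun t z hz => ?_⟩
  exact radialHomeomorph_smul hN hpos hhom norm_toLp_circle_smul t ⟨z, _⟩ _

/-- The boundary of the unit polydisc `∂((D²)^j)` is homeomorphic to the sphere `S^{2j-1}`,
equivariantly for the coordinatewise action of the torus `(Fin j → Circle)`. -/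
theorem stmt6 (j : ℕ) (hj : 1 ≤ j) :
    ∃ e : polydiscBoundary j ≃ₜ euclideanSphereSet j,
      ∀ (t : Fin j → Circle) (z : polydiscBoundary j)
        (hz : t • (z : Fin j → ℂ) ∈ polydiscBoundary j),
        ((e ⟨t • (z : Fin j → ℂ), hz⟩ : euclideanSphereSet j) : Fin j → ℂ) =
          t • ((e z : euclideanSphereSet j) : Fin j → ℂ) :=
  stmt6_general j
end

section
/- Let j ≥ 1 be a natural number. Let D ⊆ (Fin j → ℂ) be the subspace {z | ∀ i, ‖z i‖ ≤ 1} (the closed unit polydisc (D²)^j) and let B ⊆ (Fin j → ℂ) be the subspace {z | ∑ i, ‖z i‖^2 ≤ 1} (the closed Euclidean unit ball, i.e. D^{2j}). Then there is a homeomorphism e : B → D that is equivariant for the coordinatewise action of the torus (Fin j → Circle): e (t • z) = t • (e z) for all t and z. -/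
/-- The closed unit polydisc `(D²)^j` in `ℂ^j`. -/
def closedPolydisc (j : ℕ) : Set (Fin j → ℂ) :=
  {z | ∀ i, ‖z i‖ ≤ 1}

/-- The closed Euclidean unit ball `D^{2j}` in `ℂ^j`. -/
def euclideanBallSet (j : ℕ) : Set (Fin j → ℂ) :=
  {z | ∑ i, ‖z i‖ ^ 2 ≤ 1}

namespace Stmt7Aux

variable {j : ℕ}

/-- Euclidean norm on `Fin j → ℂ`. -/
noncomputable def n2 (z : Fin j → ℂ) : ℝ := Real.sqrt (∑ i, ‖z i‖ ^ 2)

lemma n2_nonneg (z : Fin j → ℂ) : 0 ≤ n2 z := Real.sqrt_nonneg _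

lemma sum_nonneg' (z : Fin j → ℂ) : 0 ≤ ∑ i, ‖z i‖ ^ 2 :=
  Finset.sum_nonneg fun i _ => sq_nonneg _

lemma sq_n2 (z : Fin j → ℂ) : n2 z ^ 2 = ∑ i, ‖z i‖ ^ 2 :=
  Real.sq_sqrt (sum_nonneg' z)

lemma n2_eq_zero_iff (z : Fin j → ℂ) : n2 z = 0 ↔ z = 0 := by
  rw [n2, Real.sqrt_eq_zero (sum_nonneg' z)]
  constructor
  · intro h
    funext i
    have := (Finset.sum_eq_zero_iff_of_nonneg (fun i _ => sq_nonneg ‖z i‖)).1 h i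
      (Finset.mem_univ i)
    have : ‖z i‖ = 0 := by nlinarith [norm_nonneg (z i)]
    simpa using norm_eq_zero.1 this
  · rintro rfl; simp

lemma coord_le_n2 (z : Fin j → ℂ) (i : Fin j) : ‖z i‖ ≤ n2 z := by
  have h : ‖z i‖ ^ 2 ≤ ∑ k, ‖z k‖ ^ 2 :=
    Finset.single_le_sum (fun k _ => sq_nonneg ‖z k‖) (Finset.mem_univ i)
  calc ‖z i‖ = Real.sqrt (‖z i‖ ^ 2) := (Real.sqrt_sq (norm_nonneg _)).symm
    _ ≤ n2 z := Real.sqrt_le_sqrt h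

lemma norm_le_n2 (z : Fin j → ℂ) : ‖z‖ ≤ n2 z := by
  rcases eq_or_ne j 0 with rfl | hj
  · simp [n2, Subsingleton.elim z 0]
  · exact (pi_norm_le_iff_of_nonneg (n2_nonneg z)).2 (coord_le_n2 z)

lemma n2_le (z : Fin j → ℂ) : n2 z ≤ Real.sqrt j * ‖z‖ := by
  have h : ∑ i, ‖z i‖ ^ 2 ≤ (j : ℝ) * ‖z‖ ^ 2 := by
    calc ∑ i, ‖z i‖ ^ 2 ≤ ∑ _i : Fin j, ‖z‖ ^ 2 :=
          Finset.sum_le_sum fun i _ =>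
            pow_le_pow_left₀ (norm_nonneg _) (norm_le_pi_norm z i) 2
      _ = (j : ℝ) * ‖z‖ ^ 2 := by simp [Finset.sum_const, mul_comm]
  calc n2 z ≤ Real.sqrt ((j : ℝ) * ‖z‖ ^ 2) := Real.sqrt_le_sqrt h
    _ = Real.sqrt j * ‖z‖ := by
        rw [Real.sqrt_mul (Nat.cast_nonneg j), Real.sqrt_sq (norm_nonneg _)]

lemma n2_smul (c : ℝ) (hc : 0 ≤ c) (z : Fin j → ℂ) : n2 (c • z) = c * n2 z := by
  rw [n2, n2]
  have : ∀ i, ‖(c • z) i‖ ^ 2 = c ^ 2 * ‖z i‖ ^ 2 := by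
    intro i
    simp [Pi.smul_apply, norm_smul, abs_of_nonneg hc, mul_pow]
  simp_rw [this]
  rw [← Finset.mul_sum, Real.sqrt_mul (sq_nonneg c), Real.sqrt_sq hc]

/-- Ball → polydisc map. -/
noncomputable def f (z : Fin j → ℂ) : Fin j → ℂ := (n2 z / ‖z‖) • z

/-- Polydisc → ball map. -/
noncomputable def g (z : Fin j → ℂ) : Fin j → ℂ := (‖z‖ / n2 z) • z

@[simp] lemma f_zero : f (0 : Fin j → ℂ) = 0 := by simp [f]
@[simp] lemma g_zero : g (0 : Fin j → ℂ) = 0 := by simp [g]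

lemma norm_z_pos {z : Fin j → ℂ} (hz : z ≠ 0) : 0 < ‖z‖ := norm_pos_iff.2 hz

lemma n2_pos {z : Fin j → ℂ} (hz : z ≠ 0) : 0 < n2 z :=
  lt_of_le_of_ne (n2_nonneg z) fun h => hz ((n2_eq_zero_iff z).1 h.symm)

lemma norm_f (z : Fin j → ℂ) : ‖f z‖ = n2 z := by
  rcases eq_or_ne z 0 with rfl | hz
  · simp [n2]
  · rw [f, norm_smul, Real.norm_eq_abs,
      abs_of_nonneg (div_nonneg (n2_nonneg z) (norm_nonneg z)),
      div_mul_cancel₀ _ (norm_z_pos hz).ne']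

lemma n2_g (z : Fin j → ℂ) : n2 (g z) = ‖z‖ := by
  rcases eq_or_ne z 0 with rfl | hz
  · simp [n2]
  · rw [g, n2_smul _ (div_nonneg (norm_nonneg z) (n2_nonneg z)),
      div_mul_cancel₀ _ (n2_pos hz).ne']

lemma g_f (z : Fin j → ℂ) : g (f z) = z := by
  rcases eq_or_ne z 0 with rfl | hz
  · simp
  · have hn : (0:ℝ) < ‖z‖ := norm_z_pos hz
    have h2 : (0:ℝ) < n2 z := n2_pos hz
    rw [g, norm_f, f, n2_smul _ (div_nonneg (n2_nonneg z) (norm_nonneg z)),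
      smul_smul]
    have h : n2 z / (n2 z / ‖z‖ * n2 z) * (n2 z / ‖z‖) = 1 := by field_simp
    rw [h, one_smul]

lemma f_g (z : Fin j → ℂ) : f (g z) = z := by
  rcases eq_or_ne z 0 with rfl | hz
  · simp
  · have hn : (0:ℝ) < ‖z‖ := norm_z_pos hz
    have h2 : (0:ℝ) < n2 z := n2_pos hz
    have hgz : ‖g z‖ = ‖z‖ / n2 z * ‖z‖ := by
      rw [g, norm_smul, Real.norm_eq_abs,
        abs_of_nonneg (div_nonneg (norm_nonneg z) (n2_nonneg z))]
    rw [f, n2_g, hgz, g, smul_smul]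
    have : ‖z‖ / (‖z‖ / n2 z * ‖z‖) * (‖z‖ / n2 z) = 1 := by
      field_simp
    rw [this, one_smul]

lemma continuous_n2 : Continuous (n2 (j := j)) :=
  Real.continuous_sqrt.comp <|
    continuous_finset_sum _ fun i _ => ((continuous_apply i).norm).pow 2

lemma continuous_f : Continuous (f (j := j)) := by
  rw [continuous_iff_continuousAt]
  intro z
  rcases eq_or_ne z 0 with rfl | hz
  · have hb : ∀ w : Fin j → ℂ, ‖f w‖ ≤ Real.sqrt j * ‖w‖ := by
      intro w; rw [norm_f]; exact n2_le w
    have ht : Filter.Tendsto (fun w : Fin j → ℂ => Real.sqrt j * ‖w‖)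
        (nhds 0) (nhds 0) := by
      have := (continuous_norm (E := Fin j → ℂ)).tendsto 0
      simpa using (this.const_mul (Real.sqrt j))
    have : Filter.Tendsto (f (j := j)) (nhds 0) (nhds 0) :=
      squeeze_zero_norm hb ht
    simpa [ContinuousAt] using this
  · exact ((continuous_n2.continuousAt.div continuous_norm.continuousAt
      (norm_z_pos hz).ne').smul continuous_id.continuousAt)

lemma continuous_g : Continuous (g (j := j)) := by
  rw [continuous_iff_continuousAt]
  intro z
  rcases eq_or_ne z 0 with rfl | hz
  · have hb : ∀ w : Fin j → ℂ, ‖g w‖ ≤ ‖w‖ := by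
      intro w
      rcases eq_or_ne w 0 with rfl | hw
      · simp
      · rw [g, norm_smul, Real.norm_eq_abs,
          abs_of_nonneg (div_nonneg (norm_nonneg w) (n2_nonneg w))]
        have h1 : ‖w‖ / n2 w ≤ 1 :=
          div_le_one_of_le₀ (norm_le_n2 w) (n2_nonneg w)
        calc ‖w‖ / n2 w * ‖w‖ ≤ 1 * ‖w‖ :=
              mul_le_mul_of_nonneg_right h1 (norm_nonneg w)
          _ = ‖w‖ := one_mul _
    have ht : Filter.Tendsto (fun w : Fin j → ℂ => ‖w‖) (nhds 0) (nhds 0) := by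
      simpa using (continuous_norm (E := Fin j → ℂ)).tendsto 0
    have : Filter.Tendsto (g (j := j)) (nhds 0) (nhds 0) :=
      squeeze_zero_norm hb ht
    simpa [ContinuousAt] using this
  · exact ((continuous_norm.continuousAt.div continuous_n2.continuousAt
      (n2_pos hz).ne').smul continuous_id.continuousAt)

lemma f_mem (z : Fin j → ℂ) (hz : z ∈ euclideanBallSet j) :
    f z ∈ closedPolydisc j := by
  intro i
  have h1 : n2 z ≤ 1 := by
    rw [n2]
    exact Real.sqrt_le_one.2 (by simpa [euclideanBallSet] using hz)
  calc ‖f z i‖ ≤ ‖f z‖ := norm_le_pi_norm _ i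
    _ = n2 z := norm_f z
    _ ≤ 1 := h1

lemma g_mem (z : Fin j → ℂ) (hz : z ∈ closedPolydisc j) :
    g z ∈ euclideanBallSet j := by
  rcases eq_or_ne j 0 with rfl | hjne
  · simp [euclideanBallSet]
  have hnorm : ‖z‖ ≤ 1 := (pi_norm_le_iff_of_nonneg zero_le_one).2 hz
  have : ∑ i, ‖g z i‖ ^ 2 = n2 (g z) ^ 2 := (sq_n2 (g z)).symm
  have h2 : ∑ i, ‖g z i‖ ^ 2 = ‖z‖ ^ 2 := by rw [this, n2_g]
  show ∑ i, ‖g z i‖ ^ 2 ≤ 1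
  rw [h2]
  nlinarith [norm_nonneg z]

lemma norm_circle_smul (t : Fin j → Circle) (z : Fin j → ℂ) (i : Fin j) :
    ‖(t • z) i‖ = ‖z i‖ := by
  simp [Pi.smul_apply', Circle.norm_smul]

lemma n2_circle_smul (t : Fin j → Circle) (z : Fin j → ℂ) :
    n2 (t • z) = n2 z := by
  rw [n2, n2]
  congr 1
  exact Finset.sum_congr rfl fun i _ => by rw [norm_circle_smul]

lemma norm_circle_smul' (t : Fin j → Circle) (z : Fin j → ℂ) :
    ‖t • z‖ = ‖z‖ := by
  rcases eq_or_ne j 0 with rfl | hjne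
  · rw [Subsingleton.elim (t • z) z]
  · apply le_antisymm
    · refine (pi_norm_le_iff_of_nonneg (norm_nonneg z)).2 fun i => ?_
      rw [norm_circle_smul]; exact norm_le_pi_norm z i
    · refine (pi_norm_le_iff_of_nonneg (norm_nonneg _)).2 fun i => ?_
      rw [← norm_circle_smul t z i]; exact norm_le_pi_norm _ i

lemma f_equivariant (t : Fin j → Circle) (z : Fin j → ℂ) :
    f (t • z) = t • f z := by
  rw [f, f, n2_circle_smul, norm_circle_smul']
  funext i
  simp only [Pi.smul_apply, Pi.smul_apply']
  exact smul_comm _ _ _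

end Stmt7Aux

set_option maxHeartbeats 1000000 in
open Stmt7Aux in
/-- The closed Euclidean ball `D^{2j}` is homeomorphic to the closed polydisc `(D²)^j`,
equivariantly for the coordinatewise action of the torus `(Fin j → Circle)`. -/
theorem stmt7 (j : ℕ) (hj : 1 ≤ j) :
    ∃ e : euclideanBallSet j ≃ₜ closedPolydisc j,
      ∀ (t : Fin j → Circle) (z : euclideanBallSet j)
        (hz : t • (z : Fin j → ℂ) ∈ euclideanBallSet j),
        ((e ⟨t • (z : Fin j → ℂ), hz⟩ : closedPolydisc j) : Fin j → ℂ) =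
          t • ((e z : closedPolydisc j) : Fin j → ℂ) := by
  refine ⟨{
    toFun := fun z => ⟨f (z : Fin j → ℂ), f_mem _ z.2⟩
    invFun := fun w => ⟨g (w : Fin j → ℂ), g_mem _ w.2⟩
    left_inv := fun z => Subtype.ext (g_f (z : Fin j → ℂ))
    right_inv := fun w => Subtype.ext (f_g (w : Fin j → ℂ))
    continuous_toFun := (continuous_f.comp continuous_subtype_val).subtype_mk _
    continuous_invFun := (continuous_g.comp continuous_subtype_val).subtype_mk _
  }, ?_⟩
  intro t z hz
  exact f_equivariant t z
end

section
/- Let B = Metric.closedBall (0 : EuclideanSpace ℂ (Fin 2)) 1 with the equivalence relation z ~ w iff z = w, or (‖z‖ = 1 and ‖w‖ = 1 and there exists t : Circle with t • z = w). Let S = Metric.sphere (0 : EuclideanSpace ℂ (Fin 3)) 1 with the equivalence relation x ≈ y iff there exists t : Circle with t • x = y. Then the quotient B/~ is homeomorphic to the quotient S/≈; that is, attaching the cone on S³ to ℂP¹ along the Hopf map yields ℂP². -/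
/-- The relation on the closed unit ball of `ℂ²` identifying boundary points in the
same circle orbit: attaching the cone on `S³` to `ℂP¹` along the Hopf map. -/
def hopfAttachRel
    (z w : ↥(Metric.closedBall (0 : EuclideanSpace ℂ (Fin 2)) 1)) : Prop :=
  z = w ∨ (‖(z : EuclideanSpace ℂ (Fin 2))‖ = 1 ∧ ‖(w : EuclideanSpace ℂ (Fin 2))‖ = 1 ∧
    ∃ t : Circle, (t : ℂ) • (z : EuclideanSpace ℂ (Fin 2)) = (w : EuclideanSpace ℂ (Fin 2)))

/-- The scalar circle action relation on the unit sphere `S⁵ ⊆ ℂ³`. -/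
def sphereCircleRel3
    (x y : ↥(Metric.sphere (0 : EuclideanSpace ℂ (Fin 3)) 1)) : Prop :=
  ∃ t : Circle, (t : ℂ) • (x : EuclideanSpace ℂ (Fin 3)) = (y : EuclideanSpace ℂ (Fin 3))

/-!
The map `z ↦ (z, √(1 - ‖z‖²))` sends the closed unit ball of `ℂ²` onto the hemisphere of `S⁵`
where the last coordinate is real and nonnegative. Every circle orbit of `S⁵` meets this
hemisphere (polar decomposition of the last coordinate), in a single point when the last
coordinate is nonzero and in a boundary circle orbit otherwise. So the induced map of quotients
is a continuous bijection from a compact space; its target is Hausdorff because a compact group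
acts properly, hence it is a homeomorphism.
-/

open Metric

namespace EuclideanSpace

variable {𝕜 : Type*} {n : ℕ}

def snoc (z : EuclideanSpace 𝕜 (Fin n)) (c : 𝕜) : EuclideanSpace 𝕜 (Fin (n + 1)) :=
  WithLp.toLp 2 (Fin.snoc (α := fun _ => 𝕜) z.ofLp c)

@[simp] lemma snoc_castSucc (z : EuclideanSpace 𝕜 (Fin n)) (c : 𝕜) (i : Fin n) :
    snoc z c i.castSucc = z i := Fin.snoc_castSucc (α := fun _ => 𝕜) ..

@[simp] lemma snoc_last (z : EuclideanSpace 𝕜 (Fin n)) (c : 𝕜) :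
    snoc z c (Fin.last n) = c := Fin.snoc_last (α := fun _ => 𝕜) ..

lemma norm_snoc_sq [RCLike 𝕜] (z : EuclideanSpace 𝕜 (Fin n)) (c : 𝕜) :
    ‖snoc z c‖ ^ 2 = ‖z‖ ^ 2 + ‖c‖ ^ 2 := by
  simp [EuclideanSpace.norm_sq_eq, Fin.sum_univ_castSucc]

lemma smul_snoc [RCLike 𝕜] (a : 𝕜) (z : EuclideanSpace 𝕜 (Fin n)) (c : 𝕜) :
    a • snoc z c = snoc (a • z) (a * c) := by
  ext i
  induction i using Fin.lastCases <;> simp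

lemma snoc_inj [RCLike 𝕜] {z z' : EuclideanSpace 𝕜 (Fin n)} {c c' : 𝕜} :
    snoc z c = snoc z' c' ↔ z = z' ∧ c = c' := by
  refine ⟨fun h => ⟨?_, by simpa using congrArg (· (Fin.last n)) h⟩,
    fun ⟨hz, hc⟩ => hz ▸ hc ▸ rfl⟩
  ext i
  simpa using congrArg (· i.castSucc) h

lemma exists_snoc_eq [RCLike 𝕜] (x : EuclideanSpace 𝕜 (Fin (n + 1))) : ∃ z c, snoc z c = x :=
  ⟨WithLp.toLp 2 (Fin.init x.ofLp), x (Fin.last n), by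
    ext i
    induction i using Fin.lastCases <;> simp [Fin.init]⟩

lemma continuous_snoc [RCLike 𝕜] :
    Continuous fun p : EuclideanSpace 𝕜 (Fin n) × 𝕜 => snoc p.1 p.2 := by
  refine (PiLp.continuous_toLp 2 _).comp (continuous_pi fun i => ?_)
  induction i using Fin.lastCases
  · simpa using continuous_snd
  · simp only [Fin.snoc_castSucc]
    fun_prop

noncomputable def hemisphereLift (z : EuclideanSpace ℂ (Fin n)) :
    EuclideanSpace ℂ (Fin (n + 1)) :=
  snoc z (Real.sqrt (1 - ‖z‖ ^ 2) : ℂ)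

lemma norm_hemisphereLift {z : EuclideanSpace ℂ (Fin n)} (hz : ‖z‖ ≤ 1) :
    ‖hemisphereLift z‖ = 1 := by
  have hsq : ‖hemisphereLift z‖ ^ 2 = 1 := by
    rw [hemisphereLift, norm_snoc_sq, Complex.norm_real, Real.norm_eq_abs, sq_abs,
      Real.sq_sqrt (by nlinarith [norm_nonneg z])]
    ring
  exact (pow_eq_one_iff_of_nonneg (norm_nonneg _) two_ne_zero).1 hsq

lemma continuous_hemisphereLift : Continuous (hemisphereLift (n := n)) :=
  continuous_snoc.comp (continuous_id.prodMk (Complex.continuous_ofReal.comp (by fun_prop)))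

lemma hemisphereLift_smul_of_norm_eq_one {z : EuclideanSpace ℂ (Fin n)} (hz : ‖z‖ = 1)
    (t : Circle) :
    hemisphereLift ((t : ℂ) • z) = (t : ℂ) • hemisphereLift z := by
  simp [hemisphereLift, smul_snoc, norm_smul, Circle.norm_coe, hz]

lemma eq_or_smul_eq_of_smul_hemisphereLift_eq {z w : EuclideanSpace ℂ (Fin n)} (hz : ‖z‖ ≤ 1)
    {t : Circle} (h : (t : ℂ) • hemisphereLift z = hemisphereLift w) :
    z = w ∨ ‖z‖ = 1 ∧ ‖w‖ = 1 ∧ (t : ℂ) • z = w := by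
  obtain ⟨hzw, hc⟩ := snoc_inj.1 ((smul_snoc _ _ _).symm.trans h)
  have hnorm : ‖w‖ = ‖z‖ := by simp [← hzw, norm_smul, Circle.norm_coe]
  rw [hnorm] at hc
  by_cases hs : Real.sqrt (1 - ‖z‖ ^ 2) = 0
  · have hz1 : ‖z‖ = 1 := by
      have := Real.sqrt_eq_zero'.1 hs
      nlinarith [norm_nonneg z]
    exact Or.inr ⟨hz1, hnorm.trans hz1, hzw⟩
  · have ht : (t : ℂ) = 1 := by
      simpa using mul_right_cancel₀ (by exact_mod_cast hs) (hc.trans (one_mul _).symm)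
    exact Or.inl (by simpa [ht] using hzw)

lemma exists_smul_hemisphereLift_eq {x : EuclideanSpace ℂ (Fin (n + 1))} (hx : ‖x‖ = 1) :
    ∃ z : EuclideanSpace ℂ (Fin n), ‖z‖ ≤ 1 ∧ ∃ t : Circle, (t : ℂ) • hemisphereLift z = x := by
  obtain ⟨y, c, rfl⟩ := exists_snoc_eq x
  have hyc : ‖y‖ ^ 2 + ‖c‖ ^ 2 = 1 := by rw [← norm_snoc_sq, hx, one_pow]
  set t := Circle.exp (Complex.arg c)
  have hy : ‖((t⁻¹ : Circle) : ℂ) • y‖ = ‖y‖ := by simp [norm_smul, Circle.norm_coe]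
  refine ⟨((t⁻¹ : Circle) : ℂ) • y, by nlinarith [norm_nonneg c, norm_nonneg y], t, ?_⟩
  have hsqrt : Real.sqrt (1 - ‖y‖ ^ 2) = ‖c‖ := by
    rw [← hyc, add_sub_cancel_left, Real.sqrt_sq (norm_nonneg c)]
  -- polar decomposition `c = ‖c‖ e^{i arg c}`
  rw [hemisphereLift, hy, hsqrt, smul_snoc, smul_smul, Circle.coe_inv,
    mul_inv_cancel₀ (Circle.coe_ne_zero t), one_smul, mul_comm, Circle.coe_exp,
    Complex.norm_mul_exp_arg_mul_I]

end EuclideanSpace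

theorem properSMul_of_compactSpace {G X : Type*} [Group G] [TopologicalSpace G] [CompactSpace G]
    [TopologicalSpace X] [T2Space X] [MulAction G X] [ContinuousSMul G X] : ProperSMul G X where
  isProperMap_smul_pair :=
    isProperMap_of_comp_of_t2 (g := Prod.snd) (by fun_prop) continuous_snd
      isProperMap_snd_of_compactSpace

noncomputable def Quot.homeomorphOfCompactSpaceOfT2Space {X Y : Type*} [TopologicalSpace X]
    [CompactSpace X] [TopologicalSpace Y] {r : X → X → Prop} {s : Y → Y → Prop}
    [T2Space (Quot s)] (hs : Equivalence s) (f : X → Y) (hf : Continuous f)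
    (rel_iff : ∀ x x', s (f x) (f x') ↔ r x x') (exists_rel : ∀ y, ∃ x, s (f x) y) :
    Quot r ≃ₜ Quot s :=
  have hbij : Function.Bijective (Quot.map f fun x x' => (rel_iff x x').2) := by
    constructor
    · rintro ⟨x⟩ ⟨x'⟩ h
      exact Quot.sound ((rel_iff x x').1 (hs.eqvGen_iff.1 (Quot.eqvGen_exact h)))
    · rintro ⟨y⟩
      obtain ⟨x, hx⟩ := exists_rel y
      exact ⟨Quot.mk r x, Quot.sound hx⟩
  (continuous_quot_lift _ (continuous_quot_mk.comp hf)).homeoOfEquivCompactToT2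
    (f := Equiv.ofBijective _ hbij)

section CircleAction

variable {E : Type*} [NormedAddCommGroup E] [NormedSpace ℂ E] {r : ℝ}

noncomputable instance : MulAction Circle (sphere (0 : E) r) :=
  inferInstanceAs (MulAction (sphere (0 : ℂ) 1) (sphere (0 : E) r))

instance : ContinuousSMul Circle (sphere (0 : E) r) :=
  inferInstanceAs (ContinuousSMul (sphere (0 : ℂ) 1) (sphere (0 : E) r))

@[simp] lemma Circle.coe_smul_sphere (t : Circle) (x : sphere (0 : E) r) :
    ((t • x : sphere (0 : E) r) : E) = (t : ℂ) • (x : E) := rfl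

end CircleAction

theorem sphereCircleRel3_eq_orbitRel :
    sphereCircleRel3 =
      (MulAction.orbitRel Circle (sphere (0 : EuclideanSpace ℂ (Fin 3)) 1)).r := by
  ext x y
  rw [Setoid.comm', MulAction.orbitRel_apply, MulAction.mem_orbit_iff]
  simp [sphereCircleRel3, Subtype.ext_iff]

instance : T2Space (Quot sphereCircleRel3) := by
  have := properSMul_of_compactSpace (G := Circle) (X := sphere (0 : EuclideanSpace ℂ (Fin 3)) 1)
  rw [sphereCircleRel3_eq_orbitRel]
  exact t2Space_quotient_mulAction_of_properSMul

theorem equivalence_sphereCircleRel3 : Equivalence sphereCircleRel3 :=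
  sphereCircleRel3_eq_orbitRel ▸ (MulAction.orbitRel _ _).iseqv

noncomputable def hemisphereLiftSphere {n : ℕ}
    (z : closedBall (0 : EuclideanSpace ℂ (Fin n)) 1) :
    sphere (0 : EuclideanSpace ℂ (Fin (n + 1))) 1 :=
  ⟨EuclideanSpace.hemisphereLift z,
    mem_sphere_zero_iff_norm.2
      (EuclideanSpace.norm_hemisphereLift (mem_closedBall_zero_iff.1 z.2))⟩

theorem continuous_hemisphereLiftSphere {n : ℕ} : Continuous (hemisphereLiftSphere (n := n)) :=
  (EuclideanSpace.continuous_hemisphereLift.comp continuous_subtype_val).subtype_mk _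

theorem sphereCircleRel3_hemisphereLiftSphere_iff
    (z w : closedBall (0 : EuclideanSpace ℂ (Fin 2)) 1) :
    sphereCircleRel3 (hemisphereLiftSphere z) (hemisphereLiftSphere w) ↔ hopfAttachRel z w := by
  constructor
  · rintro ⟨t, h⟩
    rcases EuclideanSpace.eq_or_smul_eq_of_smul_hemisphereLift_eq
      (mem_closedBall_zero_iff.1 z.2) h with h | ⟨hz, hw, h⟩
    · exact Or.inl (Subtype.ext h)
    · exact Or.inr ⟨hz, hw, t, h⟩
  · rintro (rfl | ⟨hz, -, t, h⟩)
    · exact equivalence_sphereCircleRel3.refl _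
    · refine ⟨t, ?_⟩
      change (t : ℂ) • EuclideanSpace.hemisphereLift (z : EuclideanSpace ℂ (Fin 2)) =
        EuclideanSpace.hemisphereLift (w : EuclideanSpace ℂ (Fin 2))
      rw [← EuclideanSpace.hemisphereLift_smul_of_norm_eq_one hz, h]

theorem exists_sphereCircleRel3_hemisphereLiftSphere
    (x : sphere (0 : EuclideanSpace ℂ (Fin 3)) 1) :
    ∃ z, sphereCircleRel3 (hemisphereLiftSphere z) x := by
  obtain ⟨z, hz, t, h⟩ :=
    EuclideanSpace.exists_smul_hemisphereLift_eq (mem_sphere_zero_iff_norm.1 x.2)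
  exact ⟨⟨z, mem_closedBall_zero_iff.2 hz⟩, t, h⟩

/-- Attaching the cone on `S³` to `ℂP¹` along the Hopf map yields `ℂP²`, i.e. the
quotient of the closed ball `D⁴ ⊆ ℂ²` by the boundary circle action is homeomorphic to
the quotient `S⁵/S¹ = ℂP²`. -/
theorem stmt10 :
    Nonempty (Quot hopfAttachRel ≃ₜ Quot sphereCircleRel3) := by
  have : CompactSpace (closedBall (0 : EuclideanSpace ℂ (Fin 2)) 1) :=
    isCompact_iff_compactSpace.1 (isCompact_closedBall _ _)
  exact ⟨Quot.homeomorphOfCompactSpaceOfT2Space equivalence_sphereCircleRel3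
    hemisphereLiftSphere continuous_hemisphereLiftSphere sphereCircleRel3_hemisphereLiftSphere_iff
    exists_sphereCircleRel3_hemisphereLiftSphere⟩
end

section
/- Let m be a natural number and j : Fin m → ℕ with j i ≥ 1 for all i. Let K be a simplicial complex on Fin m containing the empty set, and for each i let K_i = ∂Δ^{j i − 1} be the family of all proper subsets of Fin (j i). Then a finite subset τ of Σ i, Fin (j i) is a minimal non-face of the composed complex K(K₁,…,K_m) (i.e. τ ∉ K(K₁,…,K_m) and every proper subset of τ belongs to K(K₁,…,K_m)) if and only if there exists a minimal non-face μ of K such that τ = { ⟨i,v⟩ | i ∈ μ, v : Fin (j i) }, i.e. τ is the union of the full blocks over the vertices of μ. -/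
/-- A simplicial complex on the vertex type `V`: a downward closed family of
finite subsets of `V`. -/
def IsSimplicialComplex {V : Type*} (L : Set (Finset V)) : Prop :=
  ∀ σ ∈ L, ∀ τ ⊆ σ, τ ∈ L

/-- The moment-angle complex `Z(L) = Z(L; (D², S¹))` as a subspace of `V → ℂ`. -/
def momentAngle {V : Type*} [Fintype V] (L : Set (Finset V)) : Set (V → ℂ) :=
  ⋃ σ ∈ L, {z | (∀ v, ‖z v‖ ≤ 1) ∧ ∀ v ∉ σ, ‖z v‖ = 1}

/-- The `i`-th block `τ_i = {v | ⟨i,v⟩ ∈ τ}` of a finite subset of `Σ i, Fin (j i)`. -/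
def block {m : ℕ} {j : Fin m → ℕ} (τ : Finset ((i : Fin m) × Fin (j i))) (i : Fin m) :
    Finset (Fin (j i)) :=
  Finset.univ.filter fun v => (⟨i, v⟩ : (i : Fin m) × Fin (j i)) ∈ τ

/-- Ayzenberg's composed complex `K(K₁, …, K_m)`: the family of finite subsets `τ` of
`Σ i, Fin (j i)` such that there exists `σ ∈ K` with `τ_i ∈ K_i` for every `i ∉ σ`. -/
def composedComplex {m : ℕ} {j : Fin m → ℕ} (K : Set (Finset (Fin m)))
    (Ki : ∀ i, Set (Finset (Fin (j i)))) : Set (Finset ((i : Fin m) × Fin (j i))) :=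
  {τ | ∃ σ ∈ K, ∀ i ∉ σ, block τ i ∈ Ki i}

/-- A minimal non-face of a family `L`: a finite set not in `L` all of whose proper
subsets are in `L`. -/
def IsMinimalNonFace {V : Type*} (L : Set (Finset V)) (τ : Finset V) : Prop :=
  τ ∉ L ∧ ∀ τ' ⊂ τ, τ' ∈ L

/-- When each `K_i = ∂Δ^{j i - 1}` is the boundary of a simplex, the minimal non-faces of
the composed complex `K(K₁,…,K_m)` (the simplicial wedge `K(J)`) are exactly the unions of
full blocks over the minimal non-faces of `K`. -/
theorem stmt13 (m : ℕ) (j : Fin m → ℕ) (hj : ∀ i, 1 ≤ j i)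
    (K : Set (Finset (Fin m))) (hK : IsSimplicialComplex K) (hKe : (∅ : Finset (Fin m)) ∈ K)
    (τ : Finset ((i : Fin m) × Fin (j i))) :
    IsMinimalNonFace
        (composedComplex K (fun i => {s : Finset (Fin (j i)) | s ≠ Finset.univ})) τ ↔
      ∃ μ : Finset (Fin m), IsMinimalNonFace K μ ∧
        τ = μ.sigma (fun i => (Finset.univ : Finset (Fin (j i)))) := by
  classical
  set L := composedComplex K (fun i => {s : Finset (Fin (j i)) | s ≠ Finset.univ}) with hLdef
  set S : Finset ((i : Fin m) × Fin (j i)) → Finset (Fin m) :=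
    fun τ' => Finset.univ.filter fun i => block τ' i = Finset.univ with hSdef
  have hne : ∀ i : Fin m, (∅ : Finset (Fin (j i))) ≠ Finset.univ := by
    intro i h
    have h0 : (⟨0, hj i⟩ : Fin (j i)) ∈ (Finset.univ : Finset (Fin (j i))) := Finset.mem_univ _
    rw [← h] at h0
    exact absurd h0 (Finset.notMem_empty _)
  have memL : ∀ τ' : Finset ((i : Fin m) × Fin (j i)), τ' ∈ L ↔ S τ' ∈ K := by
    intro τ'
    constructor
    · rintro ⟨σ, hσ, h⟩
      refine hK σ hσ _ ?_
      intro i hi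
      simp only [hSdef, Finset.mem_filter, Finset.mem_univ, true_and] at hi
      by_contra hiσ
      exact h i hiσ hi
    · intro h
      refine ⟨S τ', h, fun i hi => ?_⟩
      simpa [hSdef, Finset.mem_filter] using hi
  have hSsigma : ∀ μ : Finset (Fin m),
      S (μ.sigma fun i => (Finset.univ : Finset (Fin (j i)))) = μ := by
    intro μ
    ext i
    simp only [hSdef, Finset.mem_filter, Finset.mem_univ, true_and]
    have hb : block (μ.sigma fun i => (Finset.univ : Finset (Fin (j i)))) i =
        if i ∈ μ then Finset.univ else ∅ := by
      ext v
      by_cases h : i ∈ μ <;> simp [block, Finset.mem_sigma, h]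
    rw [hb]
    by_cases h : i ∈ μ <;> simp [h, hne i]
  constructor
  · rintro ⟨hτL, hmin⟩
    have hSτ : S τ ∉ K := fun h => hτL ((memL τ).2 h)
    have hτeq : τ = (S τ).sigma fun i => (Finset.univ : Finset (Fin (j i))) := by
      ext ⟨i, v⟩
      simp only [Finset.mem_sigma, Finset.mem_univ, and_true]
      constructor
      · intro hiv
        simp only [hSdef, Finset.mem_filter, Finset.mem_univ, true_and]
        by_contra hbi
        set τ' := τ.erase ⟨i, v⟩ with hτ'
        have hτ'ss : τ' ⊂ τ := Finset.erase_ssubset hiv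
        have hτ'L : τ' ∈ L := hmin τ' hτ'ss
        have hSτ' : S τ' ∈ K := (memL τ').1 hτ'L
        refine hSτ (hK _ hSτ' _ ?_)
        intro i' hi'
        simp only [hSdef, Finset.mem_filter, Finset.mem_univ, true_and] at hi' ⊢
        have hii' : i' ≠ i := by rintro rfl; exact hbi hi'
        rw [← hi']
        ext v'
        simp only [block, Finset.mem_filter, Finset.mem_univ, true_and, hτ',
          Finset.mem_erase]
        constructor
        · exact fun h => h.2
        · intro h
          exact ⟨fun heq => hii' (congrArg Sigma.fst heq), h⟩
      · intro hi
        simp only [hSdef, Finset.mem_filter, Finset.mem_univ, true_and] at hi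
        have : v ∈ block τ i := by rw [hi]; exact Finset.mem_univ _
        simpa [block] using this
    refine ⟨S τ, ⟨hSτ, ?_⟩, hτeq⟩
    intro μ' hμ'
    set τ' := μ'.sigma fun i => (Finset.univ : Finset (Fin (j i))) with hτ'
    have hsub : τ' ⊆ τ := by
      rw [hτeq]
      exact Finset.sigma_mono hμ'.1 (fun _ => le_rfl)
    have hssub : τ' ⊂ τ := by
      refine ⟨hsub, ?_⟩
      obtain ⟨i, hiS, hiμ'⟩ := Finset.exists_of_ssubset hμ'
      intro hle
      have : (⟨i, ⟨0, hj i⟩⟩ : (i : Fin m) × Fin (j i)) ∈ τ := by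
        rw [hτeq]; exact Finset.mem_sigma.2 ⟨hiS, Finset.mem_univ _⟩
      have := hle this
      rw [hτ'] at this
      exact hiμ' (Finset.mem_sigma.1 this).1
    have := (memL τ').1 (hmin τ' hssub)
    rwa [hτ', hSsigma] at this
  · rintro ⟨μ, ⟨hμK, hμmin⟩, rfl⟩
    constructor
    · intro h
      have := (memL _).1 h
      rw [hSsigma] at this
      exact hμK this
    · intro τ' hτ'
      refine (memL τ').2 ?_
      have hsub : S τ' ⊆ μ := by
        intro i hi
        simp only [hSdef, Finset.mem_filter, Finset.mem_univ, true_and] at hi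
        have : (⟨0, hj i⟩ : Fin (j i)) ∈ block τ' i := by rw [hi]; exact Finset.mem_univ _
        have hmem : (⟨i, ⟨0, hj i⟩⟩ : (i : Fin m) × Fin (j i)) ∈ τ' := by
          simpa [block] using this
        have := hτ'.1 hmem
        exact (Finset.mem_sigma.1 this).1
      have hne' : S τ' ≠ μ := by
        intro heq
        refine hτ'.2 ?_
        intro x hx
        obtain ⟨i, v⟩ := x
        have hiμ : i ∈ μ := (Finset.mem_sigma.1 hx).1
        have : block τ' i = Finset.univ := by
          have : i ∈ S τ' := heq ▸ hiμ
          simpa [hSdef, Finset.mem_filter] using this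
        have hv : v ∈ block τ' i := by rw [this]; exact Finset.mem_univ _
        simpa [block] using hv
      exact hμmin _ ⟨hsub, fun h => hne' (le_antisymm hsub h)⟩
end
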